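/- arXiv:1705.04913 — 3 statements merged into one kernel-verified Lean document; each statement's English description precedes it below -/
import Mathlib

section
/- Let k be a field of characteristic not 2 and let r, s, n be positive integers. If the triple [r,s,n] is admissible over k, then the triple [r+1, 2s, 2n] is admissible over k (the classical doubling construction). -/
/-- A triple `[r, s, n]` is admissible over a field `K` if there exist coefficients
`c i j k ∈ K` such that `(x₁² + ⋯ + x_r²)(y₁² + ⋯ + y_s²) = z₁² + ⋯ + z_n²`
for all `x ∈ K^r`, `y ∈ K^s`, where `z_k = ∑_{i,j} c i j k * x i * y j`. -/
def IsAdmissibleTriple (K : Type*) [Field K] (r s n : ℕ) : Prop :=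
  ∃ c : Fin r → Fin s → Fin n → K,
    ∀ (x : Fin r → K) (y : Fin s → K),
      (∑ i, x i ^ 2) * (∑ j, y j ^ 2) =
        ∑ k, (∑ i, ∑ j, c i j k * x i * y j) ^ 2

namespace DoublingAux

variable {K : Type*} [Field K] {r s n : ℕ}

/-- The bilinear forms of a composition. -/
def Zb (c : Fin r → Fin s → Fin n → K) (x : Fin r → K) (y : Fin s → K) (k : Fin n) : K :=
  ∑ i, ∑ j, c i j k * x i * y j

lemma Zb_aa (c : Fin r → Fin s → Fin n → K) (x x' : Fin r → K) (y y' : Fin s → K) (k : Fin n) :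
    Zb c (fun i => x i + x' i) (fun j => y j + y' j) k =
      Zb c x y k + Zb c x y' k + Zb c x' y k + Zb c x' y' k := by
  simp only [Zb, ← Finset.sum_add_distrib]
  exact Finset.sum_congr rfl fun i _ => Finset.sum_congr rfl fun j _ => by ring

lemma Zb_as (c : Fin r → Fin s → Fin n → K) (x x' : Fin r → K) (y y' : Fin s → K) (k : Fin n) :
    Zb c (fun i => x i + x' i) (fun j => y j - y' j) k =
      Zb c x y k - Zb c x y' k + Zb c x' y k - Zb c x' y' k := by
  simp only [Zb, ← Finset.sum_add_distrib, ← Finset.sum_sub_distrib]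
  exact Finset.sum_congr rfl fun i _ => Finset.sum_congr rfl fun j _ => by ring

lemma Zb_sa (c : Fin r → Fin s → Fin n → K) (x x' : Fin r → K) (y y' : Fin s → K) (k : Fin n) :
    Zb c (fun i => x i - x' i) (fun j => y j + y' j) k =
      Zb c x y k + Zb c x y' k - Zb c x' y k - Zb c x' y' k := by
  simp only [Zb, ← Finset.sum_add_distrib, ← Finset.sum_sub_distrib]
  exact Finset.sum_congr rfl fun i _ => Finset.sum_congr rfl fun j _ => by ring

lemma Zb_ss (c : Fin r → Fin s → Fin n → K) (x x' : Fin r → K) (y y' : Fin s → K) (k : Fin n) :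
    Zb c (fun i => x i - x' i) (fun j => y j - y' j) k =
      Zb c x y k - Zb c x y' k - Zb c x' y k + Zb c x' y' k := by
  simp only [Zb, ← Finset.sum_add_distrib, ← Finset.sum_sub_distrib]
  exact Finset.sum_congr rfl fun i _ => Finset.sum_congr rfl fun j _ => by ring

lemma sum_sq_add {m : ℕ} (f g : Fin m → K) :
    ∑ i, (f i + g i) ^ 2 = ∑ i, f i ^ 2 + 2 * ∑ i, f i * g i + ∑ i, g i ^ 2 := by
  rw [Finset.mul_sum, ← Finset.sum_add_distrib, ← Finset.sum_add_distrib]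
  exact Finset.sum_congr rfl fun i _ => by ring

lemma sum_sq_sub {m : ℕ} (f g : Fin m → K) :
    ∑ i, (f i - g i) ^ 2 = ∑ i, f i ^ 2 - 2 * ∑ i, f i * g i + ∑ i, g i ^ 2 := by
  rw [Finset.mul_sum, ← Finset.sum_sub_distrib, ← Finset.sum_add_distrib]
  exact Finset.sum_congr rfl fun i _ => by ring

/-- Polarization of the composition identity. -/
lemma pol (c : Fin r → Fin s → Fin n → K) (h2 : (2 : K) ≠ 0)
    (hc : ∀ x y, (∑ i, x i ^ 2) * (∑ j, y j ^ 2) = ∑ k, (Zb c x y k) ^ 2)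
    (x x' : Fin r → K) (y y' : Fin s → K) :
    ∑ k, (Zb c x y k * Zb c x' y' k + Zb c x y' k * Zb c x' y k) =
      2 * ((∑ i, x i * x' i) * (∑ j, y j * y' j)) := by
  have h8 : (8 : K) ≠ 0 := by
    have := pow_ne_zero 3 h2
    norm_num at this
    exact this
  apply mul_left_cancel₀ h8
  have key : ∑ k, (Zb c (fun i => x i + x' i) (fun j => y j + y' j) k) ^ 2
      + ∑ k, (Zb c (fun i => x i - x' i) (fun j => y j - y' j) k) ^ 2
      - ∑ k, (Zb c (fun i => x i + x' i) (fun j => y j - y' j) k) ^ 2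
      - ∑ k, (Zb c (fun i => x i - x' i) (fun j => y j + y' j) k) ^ 2
      = 8 * ∑ k, (Zb c x y k * Zb c x' y' k + Zb c x y' k * Zb c x' y k) := by
    simp only [Zb_aa, Zb_as, Zb_sa, Zb_ss]
    rw [Finset.mul_sum, ← Finset.sum_add_distrib, ← Finset.sum_sub_distrib,
      ← Finset.sum_sub_distrib]
    exact Finset.sum_congr rfl fun k _ => by ring
  rw [← key, ← hc, ← hc, ← hc, ← hc, sum_sq_add x x', sum_sq_sub x x',
    sum_sq_add y y', sum_sq_sub y y']
  ring

/-- The coefficients of the doubled composition. -/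
def cdouble (c : Fin r → Fin s → Fin n → K) (i0 : Fin r) :
    Fin (r + 1) → Fin (s + s) → Fin (n + n) → K :=
  fun i j k =>
    Fin.addCases (motive := fun _ => K)
      (fun j₁ => Fin.addCases (motive := fun _ => K)
        (fun k₁ => Fin.cases 0 (fun i' => c i' j₁ k₁) i)
        (fun k₂ => Fin.cases (-(c i0 j₁ k₂)) (fun _ => 0) i) k)
      (fun j₂ => Fin.addCases (motive := fun _ => K)
        (fun k₁ => Fin.cases (c i0 j₂ k₁) (fun _ => 0) i)
        (fun k₂ => Fin.cases 0
          (fun i' => (if i' = i0 then 1 else -1) * c i' j₂ k₂) i) k) j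

lemma z_first (c : Fin r → Fin s → Fin n → K) (i0 : Fin r)
    (x : Fin (r + 1) → K) (y : Fin (s + s) → K) (k₁ : Fin n) :
    (∑ i, ∑ j, cdouble c i0 i j (Fin.castAdd n k₁) * x i * y j)
      = Zb c (fun i => x i.succ) (fun j => y (Fin.castAdd s j)) k₁
        + x 0 * ∑ j, c i0 j k₁ * y (Fin.natAdd s j) := by
  simp only [Zb, Fin.sum_univ_succ, Fin.sum_univ_add, cdouble, Fin.addCases_left,
    Fin.addCases_right, Fin.cases_zero, Fin.cases_succ, zero_mul, mul_zero,
    zero_add, add_zero, Finset.sum_const_zero, Finset.mul_sum]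
  ring_nf
  rw [add_comm]
  congr 1
  exact Finset.sum_congr rfl fun j _ => by ring

lemma z_second (c : Fin r → Fin s → Fin n → K) (i0 : Fin r)
    (x : Fin (r + 1) → K) (y : Fin (s + s) → K) (k₂ : Fin n) :
    (∑ i, ∑ j, cdouble c i0 i j (Fin.natAdd n k₂) * x i * y j)
      = Zb c (fun i => (if i = i0 then 1 else -1) * x i.succ)
          (fun j => y (Fin.natAdd s j)) k₂
        - x 0 * ∑ j, c i0 j k₂ * y (Fin.castAdd s j) := by
  simp only [Zb, Fin.sum_univ_succ, Fin.sum_univ_add, cdouble, Fin.addCases_left,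
    Fin.addCases_right, Fin.cases_zero, Fin.cases_succ, zero_mul, mul_zero,
    zero_add, add_zero, Finset.sum_const_zero, Finset.mul_sum, neg_mul,
    Finset.sum_neg_distrib]
  rw [sub_eq_neg_add]
  congr 1
  · rw [neg_inj]
    exact Finset.sum_congr rfl fun j _ => by ring
  · exact Finset.sum_congr rfl fun i _ => Finset.sum_congr rfl fun j _ => by ring

lemma sum_sq_add_mul {m : ℕ} (f g : Fin m → K) (a : K) :
    ∑ k, (f k + a * g k) ^ 2 =
      ∑ k, f k ^ 2 + 2 * a * ∑ k, f k * g k + a ^ 2 * ∑ k, g k ^ 2 := by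
  rw [Finset.mul_sum, Finset.mul_sum, ← Finset.sum_add_distrib, ← Finset.sum_add_distrib]
  exact Finset.sum_congr rfl fun k _ => by ring

lemma sum_sq_sub_mul {m : ℕ} (f g : Fin m → K) (a : K) :
    ∑ k, (f k - a * g k) ^ 2 =
      ∑ k, f k ^ 2 - 2 * a * ∑ k, f k * g k + a ^ 2 * ∑ k, g k ^ 2 := by
  rw [Finset.mul_sum, Finset.mul_sum, ← Finset.sum_sub_distrib, ← Finset.sum_add_distrib]
  exact Finset.sum_congr rfl fun k _ => by ring

lemma Zb_e (c : Fin r → Fin s → Fin n → K) (i0 : Fin r) (y : Fin s → K) (k : Fin n) :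
    Zb c (fun i => if i = i0 then (1 : K) else 0) y k = ∑ j, c i0 j k * y j := by
  rw [Zb, Finset.sum_eq_single i0]
  · simp
  · intro b _ hb
    simp [hb]
  · intro hmem
    exact absurd (Finset.mem_univ i0) hmem

end DoublingAux

theorem doubling_construction (K : Type*) [Field K] (hchar : ringChar K ≠ 2)
    (r s n : ℕ) (hr : 0 < r) (hs : 0 < s) (hn : 0 < n)
    (h : IsAdmissibleTriple K r s n) :
    IsAdmissibleTriple K (r + 1) (2 * s) (2 * n) := by
  classical
  obtain ⟨c, hc0⟩ := h
  have hc : ∀ (x : Fin r → K) (y : Fin s → K),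
      (∑ i, x i ^ 2) * (∑ j, y j ^ 2) = ∑ k, (DoublingAux.Zb c x y k) ^ 2 := hc0
  have h2 : (2 : K) ≠ 0 := Ring.two_ne_zero hchar
  let i0 : Fin r := ⟨0, hr⟩
  rw [two_mul, two_mul]
  refine ⟨DoublingAux.cdouble c i0, ?_⟩
  intro x y
  rw [Fin.sum_univ_succ (f := fun i => x i ^ 2), Fin.sum_univ_add (f := fun j => y j ^ 2),
    Fin.sum_univ_add (f := fun k => (∑ i, ∑ j, DoublingAux.cdouble c i0 i j k * x i * y j) ^ 2)]
  simp only [DoublingAux.z_first c i0 x y, DoublingAux.z_second c i0 x y,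
    ← DoublingAux.Zb_e c i0]
  rw [DoublingAux.sum_sq_add_mul, DoublingAux.sum_sq_sub_mul]
  -- abbreviations for the vectors involved
  have E1 := (hc (fun i => x i.succ) (fun j => y (Fin.castAdd s j))).symm
  have he1 : ∑ i : Fin r, (if i = i0 then (1 : K) else 0) ^ 2 = 1 := by
    simp [Finset.sum_ite_eq']
  have E2 := (hc (fun i => if i = i0 then (1 : K) else 0) (fun j => y (Fin.natAdd s j))).symm
  simp only [he1, one_mul] at E2
  have hsx2 : ∑ i : Fin r, ((if i = i0 then (1 : K) else -1) * x i.succ) ^ 2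
      = ∑ i : Fin r, x i.succ ^ 2 :=
    Finset.sum_congr rfl fun i _ => by split_ifs <;> ring
  have E3 := (hc (fun i => (if i = i0 then (1 : K) else -1) * x i.succ)
      (fun j => y (Fin.natAdd s j))).symm
  simp only [hsx2] at E3
  have E4 := (hc (fun i => if i = i0 then (1 : K) else 0) (fun j => y (Fin.castAdd s j))).symm
  simp only [he1, one_mul] at E4
  have hxe : ∑ i : Fin r, x i.succ * (if i = i0 then (1 : K) else 0) = x i0.succ := by
    simp [mul_ite, Finset.sum_ite_eq']
  have E5 := DoublingAux.pol c h2 hc (fun i => x i.succ)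
      (fun i => if i = i0 then (1 : K) else 0)
      (fun j => y (Fin.castAdd s j)) (fun j => y (Fin.natAdd s j))
  simp only [hxe] at E5
  rw [Finset.sum_add_distrib] at E5
  have hee : ∑ i : Fin r, (if i = i0 then (1 : K) else 0) * (if i = i0 then (1 : K) else 0)
      = 1 := by simp [Finset.sum_ite_eq']
  have E6' := DoublingAux.pol c h2 hc (fun i => if i = i0 then (1 : K) else 0)
      (fun i => if i = i0 then (1 : K) else 0)
      (fun j => y (Fin.castAdd s j)) (fun j => y (Fin.natAdd s j))
  simp only [hee, one_mul] at E6'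
  have E6 : ∑ k, DoublingAux.Zb c (fun i => if i = i0 then (1 : K) else 0)
        (fun j => y (Fin.natAdd s j)) k *
      DoublingAux.Zb c (fun i => if i = i0 then (1 : K) else 0)
        (fun j => y (Fin.castAdd s j)) k
      = ∑ j : Fin s, y (Fin.castAdd s j) * y (Fin.natAdd s j) := by
    apply mul_left_cancel₀ h2
    rw [← E6', Finset.mul_sum]
    exact Finset.sum_congr rfl fun k _ => by ring
  have F7 : ∀ k, DoublingAux.Zb c (fun i => (if i = i0 then (1 : K) else -1) * x i.succ)
        (fun j => y (Fin.natAdd s j)) k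
      = 2 * x i0.succ * DoublingAux.Zb c (fun i => if i = i0 then (1 : K) else 0)
          (fun j => y (Fin.natAdd s j)) k
        - DoublingAux.Zb c (fun i => x i.succ) (fun j => y (Fin.natAdd s j)) k := by
    intro k
    rw [eq_sub_iff_add_eq]
    simp only [DoublingAux.Zb, Finset.mul_sum, ← Finset.sum_add_distrib]
    refine Finset.sum_congr rfl fun i _ => Finset.sum_congr rfl fun j _ => ?_
    rcases eq_or_ne i i0 with hi | hi <;> simp [hi] <;> ring
  have E7 : ∑ k, DoublingAux.Zb c (fun i => (if i = i0 then (1 : K) else -1) * x i.succ)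
          (fun j => y (Fin.natAdd s j)) k *
        DoublingAux.Zb c (fun i => if i = i0 then (1 : K) else 0)
          (fun j => y (Fin.castAdd s j)) k
      = 2 * x i0.succ * ∑ k, DoublingAux.Zb c (fun i => if i = i0 then (1 : K) else 0)
            (fun j => y (Fin.natAdd s j)) k *
          DoublingAux.Zb c (fun i => if i = i0 then (1 : K) else 0)
            (fun j => y (Fin.castAdd s j)) k
        - ∑ k, DoublingAux.Zb c (fun i => x i.succ) (fun j => y (Fin.natAdd s j)) k *
          DoublingAux.Zb c (fun i => if i = i0 then (1 : K) else 0)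
            (fun j => y (Fin.castAdd s j)) k := by
    rw [Finset.mul_sum, ← Finset.sum_sub_distrib]
    refine Finset.sum_congr rfl fun k _ => ?_
    rw [F7 k]
    ring
  linear_combination (-1 : K) * E1 - (x 0) ^ 2 * E2 - E3 - (x 0) ^ 2 * E4
    - 2 * (x 0) * E5 + 4 * (x 0) * (x i0.succ) * E6 + 2 * (x 0) * E7
end

section
/- Let k be a field of characteristic not 2 and let r, s, n be positive integers. If the triple [r,s,n] is admissible over k, then the triple [r+4, 8s, 8n] is admissible over k. -/
open Finset

namespace DCF4

/-! ### Concrete 8×8 sign matrices: a Clifford family -/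

def Jm : Fin 2 → Fin 2 → ℤ := ![![0,-1],![1,0]]
def Pm : Fin 2 → Fin 2 → ℤ := ![![0,1],![1,0]]
def Nm : Fin 2 → Fin 2 → ℤ := ![![1,0],![0,-1]]
def Im : Fin 2 → Fin 2 → ℤ := ![![1,0],![0,1]]

def tens (A B C : Fin 2 → Fin 2 → ℤ) (a b : Fin 8) : ℤ :=
  A ⟨a.val / 4, by omega⟩ ⟨b.val / 4, by omega⟩ *
  B ⟨a.val / 2 % 2, by omega⟩ ⟨b.val / 2 % 2, by omega⟩ *
  C ⟨a.val % 2, by omega⟩ ⟨b.val % 2, by omega⟩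

def Qm : Fin 4 → Fin 8 → Fin 8 → ℤ :=
  ![tens Jm Im Im, tens Pm Jm Im, tens Pm Pm Jm, tens Pm Nm Jm]
def Dm : Fin 8 → ℤ := fun a => if a.val < 4 then 1 else -1

lemma Q_orth : ∀ (α : Fin 4) (b b' : Fin 8),
    (∑ a, Qm α a b * Qm α a b') = if b = b' then 1 else 0 := by decide
lemma Q_skew : ∀ (α : Fin 4) (a b : Fin 8), Qm α a b = - Qm α b a := by decide
lemma Q_anti : ∀ (α β : Fin 4), α ≠ β → ∀ (b b' : Fin 8),
    (∑ a, Qm α a b * Qm β a b') = -∑ a, Qm α a b' * Qm β a b := by decide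
lemma DQ_symm : ∀ (α : Fin 4) (a b : Fin 8), Dm a * Qm α a b = Dm b * Qm α b a := by decide
lemma D_sq : ∀ a, Dm a * Dm a = 1 := by decide

variable {K : Type*} [Field K]

lemma Q_orthK (α : Fin 4) (b b' : Fin 8) :
    (∑ a, (Qm α a b : K) * (Qm α a b')) = if b = b' then 1 else 0 := by
  have h := Q_orth α b b'
  have h2 : (∑ a, (Qm α a b : K) * (Qm α a b')) = ((∑ a, Qm α a b * Qm α a b' : ℤ) : K) := by
    push_cast; rfl
  rw [h2, h]
  split <;> simp

lemma Q_antiK (α β : Fin 4) (h : α ≠ β) (b b' : Fin 8) :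
    (∑ a, (Qm α a b : K) * (Qm β a b')) = -∑ a, (Qm α a b' : K) * (Qm β a b) := by
  have h2 := Q_anti α β h b b'
  have h3 : ((∑ a, Qm α a b * Qm β a b' : ℤ) : K) = ((-∑ a, Qm α a b' * Qm β a b : ℤ) : K) := by
    rw [h2]
  push_cast at h3
  exact h3

lemma Q_skewK (α : Fin 4) (a b : Fin 8) : (Qm α a b : K) = - (Qm α b a : K) := by
  have := Q_skew α a b; exact_mod_cast congrArg (Int.cast : ℤ → K) this

lemma DQ_symmK (α : Fin 4) (a b : Fin 8) :
    (Dm a : K) * (Qm α a b : K) = (Dm b : K) * (Qm α b a : K) := by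
  have := DQ_symm α a b; exact_mod_cast congrArg (Int.cast : ℤ → K) this

lemma D_sqK (a : Fin 8) : (Dm a : K) * (Dm a : K) = 1 := by
  have := D_sq a; exact_mod_cast congrArg (Int.cast : ℤ → K) this

/-! ### Generic summation helpers -/

lemma pairing_zero (h2 : (2:K) ≠ 0) (F : Fin 8 → Fin 8 → K)
    (hF : ∀ a c, F a c = - F c a) : (∑ a, ∑ c, F a c) = 0 := by
  have h1 : (∑ a, ∑ c, F a c) = - ∑ a, ∑ c, F a c := by
    calc ∑ a, ∑ c, F a c = ∑ c, ∑ a, F a c := Finset.sum_comm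
    _ = ∑ c, ∑ a, -(F c a) :=
        Finset.sum_congr rfl fun c _ => Finset.sum_congr rfl fun a _ => hF a c
    _ = - ∑ c, ∑ a, F c a := by simp
  have h3 : 2 * (∑ a, ∑ c, F a c) = 0 := by linear_combination h1
  rcases mul_eq_zero.mp h3 with h | h
  · exact absurd h h2
  · exact h

lemma sum_mul_sum_sum {κ ι₁ ι₂ : Type*} [Fintype κ] [Fintype ι₁] [Fintype ι₂]
    (f : ι₁ → κ → K) (g : ι₂ → κ → K) :
    ∑ k, (∑ i, f i k) * (∑ j, g j k) = ∑ i, ∑ j, ∑ k, f i k * g j k := by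
  rw [Finset.sum_congr rfl fun k _ => Finset.sum_mul_sum univ univ (f · k) (g · k)]
  rw [Finset.sum_comm]
  exact Finset.sum_congr rfl fun i _ => Finset.sum_comm

lemma sq_expand {κ : Type*} [Fintype κ] (A B : κ → K) :
    ∑ k, (A k + B k)^2 = ∑ k, A k^2 + ∑ k, B k^2 + 2 * ∑ k, A k * B k := by
  rw [Finset.mul_sum, ← sum_add_distrib, ← sum_add_distrib]
  exact Finset.sum_congr rfl fun k _ => by ring

lemma prod_expand {κ : Type*} [Fintype κ] (A B C D : κ → K) :
    ∑ k, (A k + B k) * (C k + D k)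
      = ∑ k, A k * C k + ∑ k, A k * D k + ∑ k, B k * C k + ∑ k, B k * D k := by
  rw [← sum_add_distrib, ← sum_add_distrib, ← sum_add_distrib]
  exact Finset.sum_congr rfl fun k _ => by ring

/-! ### Polarization of the admissibility identity -/

variable {r s n : ℕ}

def Fb (c : Fin r → Fin s → Fin n → K) (x : Fin r → K) (y : Fin s → K) (k : Fin n) : K :=
  ∑ i, ∑ j, c i j k * x i * y j

lemma Fb_add_x (c : Fin r → Fin s → Fin n → K) (x x' y k) :
    Fb c (fun i => x i + x' i) y k = Fb c x y k + Fb c x' y k := by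
  unfold Fb
  rw [← sum_add_distrib]
  exact Finset.sum_congr rfl fun i _ => by
    rw [← sum_add_distrib]; exact Finset.sum_congr rfl fun j _ => by ring

lemma Fb_add_y (c : Fin r → Fin s → Fin n → K) (x y y' k) :
    Fb c x (fun j => y j + y' j) k = Fb c x y k + Fb c x y' k := by
  unfold Fb
  rw [← sum_add_distrib]
  exact Finset.sum_congr rfl fun i _ => by
    rw [← sum_add_distrib]; exact Finset.sum_congr rfl fun j _ => by ring

def eb (i : Fin r) : Fin r → K := fun i' => if i' = i then 1 else 0

lemma Fb_single (c : Fin r → Fin s → Fin n → K) (i : Fin r) (y k) :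
    Fb c (eb i) y k = ∑ j, c i j k * y j := by
  unfold Fb eb
  rw [Finset.sum_congr rfl (fun i' _ => show (∑ j, c i' j k * (if i' = i then 1 else 0) * y j)
      = if i' = i then ∑ j, c i' j k * y j else 0 from by split <;> simp [*])]
  simp

lemma eb_dot (i i' : Fin r) : (∑ i'', eb i i'' * eb (K := K) i' i'') = if i = i' then 1 else 0 := by
  unfold eb
  rw [Finset.sum_congr rfl (fun i'' _ =>
      show ((if i'' = i then (1:K) else 0) * (if i'' = i' then 1 else 0))
      = if i'' = i then (if i = i' then 1 else 0) else 0 from by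
        rcases eq_or_ne i'' i with rfl | h <;> rcases eq_or_ne i'' i' with rfl | h' <;> simp_all)]
  simp

lemma stepA (h2 : (2:K) ≠ 0) (c : Fin r → Fin s → Fin n → K)
    (H : ∀ (x : Fin r → K) (y : Fin s → K),
      (∑ i, x i ^ 2) * (∑ j, y j ^ 2) = ∑ k, (Fb c x y k) ^ 2)
    (x x' : Fin r → K) (y : Fin s → K) :
    (∑ k, Fb c x y k * Fb c x' y k) = (∑ i, x i * x' i) * (∑ j, y j ^ 2) := by
  have h1 := H (fun i => x i + x' i) y
  have e1 : (∑ k, (Fb c (fun i => x i + x' i) y k)^2) = ∑ k, (Fb c x y k + Fb c x' y k)^2 :=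
    Finset.sum_congr rfl fun k _ => by rw [Fb_add_x]
  rw [e1, sq_expand, sq_expand] at h1
  have h4 := H x y
  have h5 := H x' y
  apply mul_left_cancel₀ h2
  linear_combination h4 + h5 - h1

lemma stepB (h2 : (2:K) ≠ 0) (c : Fin r → Fin s → Fin n → K)
    (H : ∀ (x : Fin r → K) (y : Fin s → K),
      (∑ i, x i ^ 2) * (∑ j, y j ^ 2) = ∑ k, (Fb c x y k) ^ 2)
    (x x' : Fin r → K) (y y' : Fin s → K) :
    (∑ k, (Fb c x y k * Fb c x' y' k + Fb c x y' k * Fb c x' y k))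
      = 2 * (∑ i, x i * x' i) * (∑ j, y j * y' j) := by
  have h1 := stepA h2 c H x x' (fun j => y j + y' j)
  have e1 : (∑ k, Fb c x (fun j => y j + y' j) k * Fb c x' (fun j => y j + y' j) k)
      = ∑ k, (Fb c x y k + Fb c x y' k) * (Fb c x' y k + Fb c x' y' k) :=
    Finset.sum_congr rfl fun k _ => by rw [Fb_add_y, Fb_add_y]
  rw [e1, prod_expand, sq_expand] at h1
  have h4 := stepA h2 c H x x' y
  have h5 := stepA h2 c H x x' y'
  rw [sum_add_distrib]
  linear_combination h1 - h4 - h5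

lemma polar (h2 : (2:K) ≠ 0) (c : Fin r → Fin s → Fin n → K)
    (H : ∀ (x : Fin r → K) (y : Fin s → K),
      (∑ i, x i ^ 2) * (∑ j, y j ^ 2) = ∑ k, (∑ i, ∑ j, c i j k * x i * y j) ^ 2)
    (i i' : Fin r) (y y' : Fin s → K) :
    (∑ k, ((∑ j, c i j k * y j) * (∑ j, c i' j k * y' j)
        + (∑ j, c i j k * y' j) * (∑ j, c i' j k * y j)))
      = 2 * (if i = i' then 1 else 0) * ∑ j, y j * y' j := by
  have H' : ∀ (x : Fin r → K) (y : Fin s → K),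
      (∑ i, x i ^ 2) * (∑ j, y j ^ 2) = ∑ k, (Fb c x y k) ^ 2 := H
  have h1 := stepB h2 c H' (eb i) (eb i') y y'
  rw [eb_dot] at h1
  rw [← h1]
  exact Finset.sum_congr rfl fun k _ => by rw [Fb_single, Fb_single, Fb_single, Fb_single]

/-! ### The three pieces of the main computation -/

lemma S1 (i0 : Fin r) (b : Fin r → (Fin s → K) → Fin n → K)
    (hD : ∀ i (y y' : Fin s → K), (∑ k, b i y k * b i y' k) = ∑ j, y j * y' j)
    (hO : ∀ i i', i ≠ i' → ∀ (y : Fin s → K), (∑ k, b i y k * b i' y k) = 0)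
    (X : Fin r → K) (Y : Fin 8 → Fin s → K) :
    (∑ a : Fin 8, ∑ k : Fin n,
        (∑ i, (if i = i0 then 1 else (Dm a : K)) * X i * b i (Y a) k)^2)
      = (∑ i, X i ^ 2) * (∑ a, ∑ j, Y a j ^ 2) := by
  have e2 : ∀ (a : Fin 8) (i i' : Fin r),
      (∑ k, ((if i = i0 then 1 else (Dm a : K)) * X i * b i (Y a) k)
            * ((if i' = i0 then 1 else (Dm a : K)) * X i' * b i' (Y a) k))
        = if i = i' then X i ^ 2 * ∑ j, Y a j * Y a j else 0 := by
    intro a i i'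
    have pull : (∑ k, ((if i = i0 then 1 else (Dm a : K)) * X i * b i (Y a) k)
            * ((if i' = i0 then 1 else (Dm a : K)) * X i' * b i' (Y a) k))
        = ((if i = i0 then 1 else (Dm a : K)) * (if i' = i0 then 1 else (Dm a : K)))
           * (X i * X i') * (∑ k, b i (Y a) k * b i' (Y a) k) := by
      rw [Finset.mul_sum]
      exact Finset.sum_congr rfl fun k _ => by ring
    rcases eq_or_ne i i' with rfl | hne
    · rw [pull, hD, if_pos rfl]
      rcases eq_or_ne i i0 with rfl | hni
      · rw [if_pos rfl]; ring
      · rw [if_neg hni, D_sqK]; ring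
    · rw [pull, hO i i' hne, mul_zero, if_neg hne]
  calc (∑ a : Fin 8, ∑ k : Fin n,
        (∑ i, (if i = i0 then 1 else (Dm a : K)) * X i * b i (Y a) k)^2)
      = ∑ a : Fin 8, ∑ i, ∑ i', ∑ k,
          ((if i = i0 then 1 else (Dm a : K)) * X i * b i (Y a) k)
            * ((if i' = i0 then 1 else (Dm a : K)) * X i' * b i' (Y a) k) := by
        refine Finset.sum_congr rfl fun a _ => ?_
        rw [Finset.sum_congr rfl fun k _ =>
          pow_two (∑ i, (if i = i0 then 1 else (Dm a : K)) * X i * b i (Y a) k)]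
        exact sum_mul_sum_sum _ _
    _ = ∑ a : Fin 8, ∑ i, (X i ^ 2 * ∑ j, Y a j * Y a j) := by
        refine Finset.sum_congr rfl fun a _ => Finset.sum_congr rfl fun i _ => ?_
        rw [Finset.sum_congr (rfl : (univ : Finset (Fin r)) = univ) fun i' _ => e2 a i i']
        simp
    _ = ∑ i, X i ^ 2 * ∑ a : Fin 8, ∑ j, Y a j ^ 2 := by
        rw [Finset.sum_comm]
        refine Finset.sum_congr rfl fun i _ => ?_
        rw [← Finset.mul_sum]
        congr 1
        exact Finset.sum_congr rfl fun a _ =>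
          Finset.sum_congr rfl fun j _ => (pow_two (Y a j)).symm
    _ = (∑ i, X i ^ 2) * (∑ a, ∑ j, Y a j ^ 2) := by
        rw [← Finset.sum_mul]

lemma S3 (h2 : (2:K) ≠ 0) (i0 : Fin r) (b : Fin r → (Fin s → K) → Fin n → K)
    (hD : ∀ i (y y' : Fin s → K), (∑ k, b i y k * b i y' k) = ∑ j, y j * y' j)
    (hA : ∀ i, i ≠ i0 → ∀ (y y' : Fin s → K),
      (∑ k, b i y k * b i0 y' k) = - ∑ k, b i y' k * b i0 y k)
    (X : Fin r → K) (q : Fin 4 → K) (Y : Fin 8 → Fin s → K) :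
    (∑ a : Fin 8, ∑ k : Fin n,
        (∑ i, (if i = i0 then 1 else (Dm a : K)) * X i * b i (Y a) k)
          * (∑ α : Fin 4, q α * ∑ cc : Fin 8, (Qm α a cc : K) * b i0 (Y cc) k)) = 0 := by
  calc (∑ a : Fin 8, ∑ k : Fin n,
        (∑ i, (if i = i0 then 1 else (Dm a : K)) * X i * b i (Y a) k)
          * (∑ α : Fin 4, q α * ∑ cc : Fin 8, (Qm α a cc : K) * b i0 (Y cc) k))
      = ∑ a : Fin 8, ∑ i, ∑ α : Fin 4, ∑ k,
          ((if i = i0 then 1 else (Dm a : K)) * X i * b i (Y a) k)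
            * (q α * ∑ cc : Fin 8, (Qm α a cc : K) * b i0 (Y cc) k) :=
        Finset.sum_congr rfl fun a _ => sum_mul_sum_sum _ _
    _ = ∑ i, ∑ α : Fin 4, ∑ a : Fin 8, ∑ k,
          ((if i = i0 then 1 else (Dm a : K)) * X i * b i (Y a) k)
            * (q α * ∑ cc : Fin 8, (Qm α a cc : K) * b i0 (Y cc) k) := by
        rw [Finset.sum_comm]
        exact Finset.sum_congr rfl fun i _ => Finset.sum_comm
    _ = 0 := by
        refine Finset.sum_eq_zero fun i _ => Finset.sum_eq_zero fun α _ => ?_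
        have pull : ∀ a : Fin 8, (∑ k, ((if i = i0 then 1 else (Dm a : K)) * X i * b i (Y a) k)
              * (q α * ∑ cc : Fin 8, (Qm α a cc : K) * b i0 (Y cc) k))
            = X i * q α * ∑ cc : Fin 8,
                ((if i = i0 then 1 else (Dm a : K)) * (Qm α a cc : K)
                  * ∑ k, b i (Y a) k * b i0 (Y cc) k) := by
          intro a
          calc (∑ k, ((if i = i0 then 1 else (Dm a : K)) * X i * b i (Y a) k)
              * (q α * ∑ cc : Fin 8, (Qm α a cc : K) * b i0 (Y cc) k))
              = ∑ k, ∑ cc : Fin 8, X i * q α *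
                  ((if i = i0 then 1 else (Dm a : K)) * (Qm α a cc : K)
                    * (b i (Y a) k * b i0 (Y cc) k)) := by
                refine Finset.sum_congr rfl fun k _ => ?_
                rw [Finset.mul_sum, Finset.mul_sum]
                exact Finset.sum_congr rfl fun cc _ => by ring
            _ = ∑ cc : Fin 8, ∑ k, X i * q α *
                  ((if i = i0 then 1 else (Dm a : K)) * (Qm α a cc : K)
                    * (b i (Y a) k * b i0 (Y cc) k)) := Finset.sum_comm
            _ = X i * q α * ∑ cc : Fin 8,
                ((if i = i0 then 1 else (Dm a : K)) * (Qm α a cc : K)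
                  * ∑ k, b i (Y a) k * b i0 (Y cc) k) := by
                rw [Finset.mul_sum]
                refine Finset.sum_congr rfl fun cc _ => ?_
                rw [Finset.mul_sum, Finset.mul_sum]
        rw [Finset.sum_congr (rfl : (univ : Finset (Fin 8)) = univ) fun a _ => pull a]
        rw [← Finset.mul_sum]
        have hz : (∑ a : Fin 8, ∑ cc : Fin 8,
            ((if i = i0 then 1 else (Dm a : K)) * (Qm α a cc : K)
              * ∑ k, b i (Y a) k * b i0 (Y cc) k)) = 0 := by
          apply pairing_zero h2
          intro a cc
          rcases eq_or_ne i i0 with rfl | hni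
          · rw [if_pos rfl, if_pos rfl, hD i (Y a) (Y cc), hD i (Y cc) (Y a),
              Q_skewK α a cc]
            have sym : (∑ j, Y a j * Y cc j) = ∑ j, Y cc j * Y a j :=
              Finset.sum_congr rfl fun j _ => mul_comm _ _
            rw [sym]; ring
          · rw [if_neg hni, if_neg hni, hA i hni (Y a) (Y cc)]
            have := DQ_symmK (K := K) α a cc
            linear_combination (-(∑ k, b i (Y cc) k * b i0 (Y a) k)) * this
        rw [hz, mul_zero]

lemma S2 (h2 : (2:K) ≠ 0) (i0 : Fin r) (b : Fin r → (Fin s → K) → Fin n → K)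
    (hD : ∀ i (y y' : Fin s → K), (∑ k, b i y k * b i y' k) = ∑ j, y j * y' j)
    (q : Fin 4 → K) (Y : Fin 8 → Fin s → K) :
    (∑ a : Fin 8, ∑ k : Fin n,
        (∑ α : Fin 4, q α * ∑ cc : Fin 8, (Qm α a cc : K) * b i0 (Y cc) k)^2)
      = (∑ α : Fin 4, q α ^ 2) * (∑ a, ∑ j, Y a j ^ 2) := by
  have pull : ∀ (a : Fin 8) (α β : Fin 4),
      (∑ k, (q α * ∑ cc : Fin 8, (Qm α a cc : K) * b i0 (Y cc) k)
          * (q β * ∑ cc : Fin 8, (Qm β a cc : K) * b i0 (Y cc) k))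
        = q α * q β * ∑ cc : Fin 8, ∑ cc' : Fin 8,
            ((Qm α a cc : K) * (Qm β a cc' : K) * ∑ j, Y cc j * Y cc' j) := by
    intro a α β
    calc (∑ k, (q α * ∑ cc : Fin 8, (Qm α a cc : K) * b i0 (Y cc) k)
          * (q β * ∑ cc : Fin 8, (Qm β a cc : K) * b i0 (Y cc) k))
        = ∑ k, (q α * q β) * ((∑ cc : Fin 8, (Qm α a cc : K) * b i0 (Y cc) k)
            * (∑ cc : Fin 8, (Qm β a cc : K) * b i0 (Y cc) k)) :=
          Finset.sum_congr rfl fun k _ => by ring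
      _ = (q α * q β) * ∑ k, ((∑ cc : Fin 8, (Qm α a cc : K) * b i0 (Y cc) k)
            * (∑ cc : Fin 8, (Qm β a cc : K) * b i0 (Y cc) k)) := by
          rw [← Finset.mul_sum]
      _ = q α * q β * ∑ cc : Fin 8, ∑ cc' : Fin 8,
            ((Qm α a cc : K) * (Qm β a cc' : K) * ∑ j, Y cc j * Y cc' j) := by
          rw [sum_mul_sum_sum (fun cc k => (Qm α a cc : K) * b i0 (Y cc) k)
            (fun cc k => (Qm β a cc : K) * b i0 (Y cc) k)]
          congr 1
          refine Finset.sum_congr rfl fun cc _ => Finset.sum_congr rfl fun cc' _ => ?_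
          rw [← hD i0 (Y cc) (Y cc')]
          rw [Finset.sum_congr (rfl : (univ : Finset (Fin n)) = univ) fun k _ =>
            show (Qm α a cc : K) * b i0 (Y cc) k * ((Qm β a cc' : K) * b i0 (Y cc') k)
              = (Qm α a cc : K) * (Qm β a cc' : K) * (b i0 (Y cc) k * b i0 (Y cc') k) from by ring]
          rw [← Finset.mul_sum]
  have diag : ∀ (α β : Fin 4), (∑ a : Fin 8, ∑ cc : Fin 8, ∑ cc' : Fin 8,
        ((Qm α a cc : K) * (Qm β a cc' : K) * ∑ j, Y cc j * Y cc' j))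
      = if α = β then (∑ a, ∑ j, Y a j ^ 2) else 0 := by
    intro α β
    have swap : (∑ a : Fin 8, ∑ cc : Fin 8, ∑ cc' : Fin 8,
        ((Qm α a cc : K) * (Qm β a cc' : K) * ∑ j, Y cc j * Y cc' j))
        = ∑ cc : Fin 8, ∑ cc' : Fin 8,
            ((∑ a : Fin 8, (Qm α a cc : K) * (Qm β a cc' : K)) * ∑ j, Y cc j * Y cc' j) := by
      rw [Finset.sum_comm]
      refine Finset.sum_congr rfl fun cc _ => ?_
      rw [Finset.sum_comm]
      refine Finset.sum_congr rfl fun cc' _ => ?_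
      rw [Finset.sum_mul]
    rw [swap]
    rcases eq_or_ne α β with rfl | hne
    · rw [if_pos rfl]
      have e : ∀ cc : Fin 8, (∑ cc' : Fin 8,
          ((∑ a : Fin 8, (Qm α a cc : K) * (Qm α a cc' : K)) * ∑ j, Y cc j * Y cc' j))
          = ∑ j, Y cc j ^ 2 := by
        intro cc
        have e1 : ∀ cc' : Fin 8, ((∑ a : Fin 8, (Qm α a cc : K) * (Qm α a cc' : K))
            * ∑ j, Y cc j * Y cc' j)
            = if cc = cc' then ∑ j, Y cc j * Y cc' j else 0 := by
          intro cc'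
          rw [Q_orthK]
          split <;> simp
        rw [Finset.sum_congr (rfl : (univ : Finset (Fin 8)) = univ) fun cc' _ => e1 cc']
        simp only [Finset.sum_ite_eq, Finset.mem_univ, if_true]
        exact Finset.sum_congr rfl fun j _ => (pow_two (Y cc j)).symm
      rw [Finset.sum_congr (rfl : (univ : Finset (Fin 8)) = univ) fun cc _ => e cc]
    · rw [if_neg hne]
      apply pairing_zero h2
      intro cc cc'
      have h3 := Q_antiK (K := K) α β hne cc cc'
      have sym : (∑ j, Y cc j * Y cc' j) = ∑ j, Y cc' j * Y cc j :=
        Finset.sum_congr rfl fun j _ => mul_comm _ _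
      rw [h3, sym]; ring
  calc (∑ a : Fin 8, ∑ k : Fin n,
        (∑ α : Fin 4, q α * ∑ cc : Fin 8, (Qm α a cc : K) * b i0 (Y cc) k)^2)
      = ∑ a : Fin 8, ∑ α : Fin 4, ∑ β : Fin 4, ∑ k,
          (q α * ∑ cc : Fin 8, (Qm α a cc : K) * b i0 (Y cc) k)
            * (q β * ∑ cc : Fin 8, (Qm β a cc : K) * b i0 (Y cc) k) := by
        refine Finset.sum_congr rfl fun a _ => ?_
        rw [Finset.sum_congr rfl fun k _ =>
          pow_two (∑ α : Fin 4, q α * ∑ cc : Fin 8, (Qm α a cc : K) * b i0 (Y cc) k)]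
        exact sum_mul_sum_sum _ _
    _ = ∑ α : Fin 4, ∑ β : Fin 4, ∑ a : Fin 8, ∑ k,
          (q α * ∑ cc : Fin 8, (Qm α a cc : K) * b i0 (Y cc) k)
            * (q β * ∑ cc : Fin 8, (Qm β a cc : K) * b i0 (Y cc) k) := by
        rw [Finset.sum_comm]
        exact Finset.sum_congr rfl fun α _ => Finset.sum_comm
    _ = ∑ α : Fin 4, ∑ β : Fin 4, (q α * q β) *
          ∑ a : Fin 8, ∑ cc : Fin 8, ∑ cc' : Fin 8,
            ((Qm α a cc : K) * (Qm β a cc' : K) * ∑ j, Y cc j * Y cc' j) := by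
        refine Finset.sum_congr rfl fun α _ => Finset.sum_congr rfl fun β _ => ?_
        rw [Finset.sum_congr (rfl : (univ : Finset (Fin 8)) = univ) fun a _ => pull a α β]
        rw [← Finset.mul_sum]
    _ = ∑ α : Fin 4, ∑ β : Fin 4, (q α * q β) *
          (if α = β then (∑ a, ∑ j, Y a j ^ 2) else 0) := by
        refine Finset.sum_congr rfl fun α _ => Finset.sum_congr rfl fun β _ => ?_
        rw [diag α β]
    _ = (∑ α : Fin 4, q α ^ 2) * (∑ a, ∑ j, Y a j ^ 2) := by
        rw [Finset.sum_mul]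
        refine Finset.sum_congr rfl fun α _ => ?_
        have e : ∀ β : Fin 4, (q α * q β) * (if α = β then (∑ a, ∑ j, Y a j ^ 2) else 0)
            = if α = β then (q α * q β) * (∑ a, ∑ j, Y a j ^ 2) else 0 := by
          intro β; split <;> simp
        rw [Finset.sum_congr (rfl : (univ : Finset (Fin 4)) = univ) fun β _ => e β]
        simp only [Finset.sum_ite_eq, Finset.mem_univ, if_true]
        rw [pow_two]

/-! ### The key identity -/

lemma key (h2 : (2:K) ≠ 0) (i0 : Fin r)
    (b : Fin r → (Fin s → K) → Fin n → K)
    (R : ∀ i i' (y y' : Fin s → K),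
      (∑ k, (b i y k * b i' y' k + b i y' k * b i' y k))
        = 2 * (if i = i' then 1 else 0) * ∑ j, y j * y' j)
    (X : Fin r → K) (q : Fin 4 → K) (Y : Fin 8 → Fin s → K) :
    (∑ i, X i ^ 2 + ∑ α : Fin 4, q α ^ 2) * (∑ a : Fin 8, ∑ j, Y a j ^ 2)
      = ∑ a : Fin 8, ∑ k : Fin n,
          ((∑ i, (if i = i0 then 1 else (Dm a : K)) * X i * b i (Y a) k)
            + ∑ α : Fin 4, q α * ∑ cc : Fin 8, (Qm α a cc : K) * b i0 (Y cc) k) ^ 2 := by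
  have hD : ∀ i (y y' : Fin s → K), (∑ k, b i y k * b i y' k) = ∑ j, y j * y' j := by
    intro i y y'
    have h := R i i y y'
    rw [if_pos rfl, sum_add_distrib] at h
    have e : (∑ k, b i y' k * b i y k) = ∑ k, b i y k * b i y' k :=
      Finset.sum_congr rfl fun k _ => mul_comm _ _
    rw [e] at h
    apply mul_left_cancel₀ h2
    linear_combination h
  have hO : ∀ i i', i ≠ i' → ∀ (y : Fin s → K), (∑ k, b i y k * b i' y k) = 0 := by
    intro i i' hne y
    have h := R i i' y y
    rw [if_neg hne, sum_add_distrib] at h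
    apply mul_left_cancel₀ h2
    linear_combination h
  have hA : ∀ i, i ≠ i0 → ∀ (y y' : Fin s → K),
      (∑ k, b i y k * b i0 y' k) = - ∑ k, b i y' k * b i0 y k := by
    intro i hni y y'
    have h := R i i0 y y'
    rw [if_neg hni, sum_add_distrib] at h
    linear_combination h
  have split : (∑ a : Fin 8, ∑ k : Fin n,
          ((∑ i, (if i = i0 then 1 else (Dm a : K)) * X i * b i (Y a) k)
            + ∑ α : Fin 4, q α * ∑ cc : Fin 8, (Qm α a cc : K) * b i0 (Y cc) k) ^ 2)
      = (∑ a : Fin 8, ∑ k : Fin n,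
          (∑ i, (if i = i0 then 1 else (Dm a : K)) * X i * b i (Y a) k)^2)
        + (∑ a : Fin 8, ∑ k : Fin n,
          (∑ α : Fin 4, q α * ∑ cc : Fin 8, (Qm α a cc : K) * b i0 (Y cc) k)^2)
        + 2 * (∑ a : Fin 8, ∑ k : Fin n,
          (∑ i, (if i = i0 then 1 else (Dm a : K)) * X i * b i (Y a) k)
            * (∑ α : Fin 4, q α * ∑ cc : Fin 8, (Qm α a cc : K) * b i0 (Y cc) k)) := by
    rw [Finset.sum_congr (rfl : (univ : Finset (Fin 8)) = univ) fun a _ =>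
      sq_expand (fun k => ∑ i, (if i = i0 then 1 else (Dm a : K)) * X i * b i (Y a) k)
        (fun k => ∑ α : Fin 4, q α * ∑ cc : Fin 8, (Qm α a cc : K) * b i0 (Y cc) k)]
    rw [sum_add_distrib, sum_add_distrib, ← Finset.mul_sum]
  rw [split, S1 i0 b hD hO X Y, S2 h2 i0 b hD q Y, S3 h2 i0 b hD hA X q Y]
  ring



/-! ### The new coefficient family -/

def cnew (c : Fin r → Fin s → Fin n → K) (i0 : Fin r) :
    Fin (r+4) → Fin (8*s) → Fin (8*n) → K := fun I Jj Kk =>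
  Sum.elim
    (fun i => (if (finProdFinEquiv.symm Jj).1 = (finProdFinEquiv.symm Kk).1
        then (if i = i0 then 1 else ((Dm ((finProdFinEquiv.symm Kk).1) : ℤ) : K)) else 0)
      * c i (finProdFinEquiv.symm Jj).2 (finProdFinEquiv.symm Kk).2)
    (fun α => ((Qm α (finProdFinEquiv.symm Kk).1 (finProdFinEquiv.symm Jj).1 : ℤ) : K)
      * c i0 (finProdFinEquiv.symm Jj).2 (finProdFinEquiv.symm Kk).2)
    (finSumFinEquiv.symm I)

lemma cnew_inl (c : Fin r → Fin s → Fin n → K) (i0 i : Fin r) (bb : Fin 8) (j : Fin s)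
    (a : Fin 8) (k : Fin n) :
    cnew c i0 (finSumFinEquiv (Sum.inl i)) (finProdFinEquiv (bb, j)) (finProdFinEquiv (a, k))
      = (if bb = a then (if i = i0 then 1 else (Dm a : K)) else 0) * c i j k := by
  unfold cnew
  simp

lemma cnew_inr (c : Fin r → Fin s → Fin n → K) (i0 : Fin r) (α : Fin 4) (bb : Fin 8)
    (j : Fin s) (a : Fin 8) (k : Fin n) :
    cnew c i0 (finSumFinEquiv (Sum.inr α)) (finProdFinEquiv (bb, j)) (finProdFinEquiv (a, k))
      = (Qm α a bb : K) * c i0 j k := by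
  unfold cnew
  simp

end DCF4

open DCF4

theorem doubling_construction_four (K : Type*) [Field K] (hchar : ringChar K ≠ 2)
    (r s n : ℕ) (hr : 0 < r) (hs : 0 < s) (hn : 0 < n)
    (h : IsAdmissibleTriple K r s n) :
    IsAdmissibleTriple K (r + 4) (8 * s) (8 * n) := by
  obtain ⟨c, H⟩ := h
  have h2 : (2:K) ≠ 0 := Ring.two_ne_zero hchar
  have R := polar h2 c H
  refine ⟨cnew c ⟨0, hr⟩, ?_⟩
  intro x y
  have L1 : (∑ I, x I ^ 2) = (∑ i, x (finSumFinEquiv (Sum.inl i)) ^ 2)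
      + ∑ α : Fin 4, x (finSumFinEquiv (Sum.inr α)) ^ 2 := by
    rw [← Equiv.sum_comp finSumFinEquiv (fun I => x I ^ 2), Fintype.sum_sum_type]
  have L2 : (∑ Jj, y Jj ^ 2) = ∑ a : Fin 8, ∑ j, y (finProdFinEquiv (a, j)) ^ 2 := by
    rw [← Equiv.sum_comp (finProdFinEquiv (m := 8) (n := s)) (fun Jj => y Jj ^ 2),
      Fintype.sum_prod_type]
  have L3 : (∑ Kk, (∑ I, ∑ Jj, cnew c ⟨0, hr⟩ I Jj Kk * x I * y Jj) ^ 2)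
      = ∑ a : Fin 8, ∑ k : Fin n,
          (∑ I, ∑ Jj, cnew c ⟨0, hr⟩ I Jj (finProdFinEquiv (a, k)) * x I * y Jj) ^ 2 := by
    rw [← Equiv.sum_comp (finProdFinEquiv (m := 8) (n := n))
      (fun Kk => (∑ I, ∑ Jj, cnew c ⟨0, hr⟩ I Jj Kk * x I * y Jj) ^ 2),
      Fintype.sum_prod_type]
  rw [L1, L2, L3]
  have zeq : ∀ (a : Fin 8) (k : Fin n),
      (∑ I, ∑ Jj, cnew c ⟨0, hr⟩ I Jj (finProdFinEquiv (a, k)) * x I * y Jj)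
        = (∑ i, (if i = ⟨0, hr⟩ then 1 else (Dm a : K)) * x (finSumFinEquiv (Sum.inl i))
              * (∑ j, c i j k * y (finProdFinEquiv (a, j))))
          + ∑ α : Fin 4, x (finSumFinEquiv (Sum.inr α))
              * ∑ cc : Fin 8, (Qm α a cc : K) * (∑ j, c ⟨0, hr⟩ j k * y (finProdFinEquiv (cc, j))) := by
    intro a k
    calc (∑ I, ∑ Jj, cnew c ⟨0, hr⟩ I Jj (finProdFinEquiv (a, k)) * x I * y Jj)
        = ∑ g : Fin r ⊕ Fin 4, ∑ p : Fin 8 × Fin s,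
            cnew c ⟨0, hr⟩ (finSumFinEquiv g) (finProdFinEquiv p) (finProdFinEquiv (a, k))
              * x (finSumFinEquiv g) * y (finProdFinEquiv p) := by
          rw [← Equiv.sum_comp finSumFinEquiv
            (fun I => ∑ Jj, cnew c ⟨0, hr⟩ I Jj (finProdFinEquiv (a, k)) * x I * y Jj)]
          exact Finset.sum_congr rfl fun g _ =>
            (Equiv.sum_comp (finProdFinEquiv (m := 8) (n := s))
              (fun Jj => cnew c ⟨0, hr⟩ (finSumFinEquiv g) Jj (finProdFinEquiv (a, k))
                * x (finSumFinEquiv g) * y Jj)).symm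
      _ = (∑ i, ∑ bb : Fin 8, ∑ j,
            ((if bb = a then (if i = ⟨0, hr⟩ then 1 else (Dm a : K)) else 0) * c i j k)
              * x (finSumFinEquiv (Sum.inl i)) * y (finProdFinEquiv (bb, j)))
          + ∑ α : Fin 4, ∑ bb : Fin 8, ∑ j,
            ((Qm α a bb : K) * c ⟨0, hr⟩ j k)
              * x (finSumFinEquiv (Sum.inr α)) * y (finProdFinEquiv (bb, j)) := by
          rw [Fintype.sum_sum_type]
          congr 1
          · refine Finset.sum_congr rfl fun i _ => ?_
            rw [Fintype.sum_prod_type]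
            exact Finset.sum_congr rfl fun bb _ => Finset.sum_congr rfl fun j _ => by
              rw [cnew_inl]
          · refine Finset.sum_congr rfl fun α _ => ?_
            rw [Fintype.sum_prod_type]
            exact Finset.sum_congr rfl fun bb _ => Finset.sum_congr rfl fun j _ => by
              rw [cnew_inr]
      _ = _ := by
          congr 1
          · refine Finset.sum_congr rfl fun i _ => ?_
            have e1 : ∀ bb : Fin 8, (∑ j,
                ((if bb = a then (if i = ⟨0, hr⟩ then 1 else (Dm a : K)) else 0) * c i j k)
                  * x (finSumFinEquiv (Sum.inl i)) * y (finProdFinEquiv (bb, j)))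
                = if bb = a then (if i = ⟨0, hr⟩ then 1 else (Dm a : K))
                    * x (finSumFinEquiv (Sum.inl i))
                    * (∑ j, c i j k * y (finProdFinEquiv (bb, j))) else 0 := by
              intro bb
              by_cases hba : bb = a
              · rw [if_pos hba, if_pos hba, Finset.mul_sum]
                exact Finset.sum_congr rfl fun j _ => by ring
              · rw [if_neg hba, if_neg hba]
                simp
            rw [Finset.sum_congr (rfl : (univ : Finset (Fin 8)) = univ) fun bb _ => e1 bb]
            rw [Finset.sum_ite_eq' univ a]
            simp
          · refine Finset.sum_congr rfl fun α _ => ?_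
            have e2 : ∀ bb : Fin 8, (∑ j,
                ((Qm α a bb : K) * c ⟨0, hr⟩ j k)
                  * x (finSumFinEquiv (Sum.inr α)) * y (finProdFinEquiv (bb, j)))
                = x (finSumFinEquiv (Sum.inr α))
                    * ((Qm α a bb : K) * ∑ j, c ⟨0, hr⟩ j k * y (finProdFinEquiv (bb, j))) := by
              intro bb
              rw [Finset.mul_sum, Finset.mul_sum]
              exact Finset.sum_congr rfl fun j _ => by ring
            rw [Finset.sum_congr (rfl : (univ : Finset (Fin 8)) = univ) fun bb _ => e2 bb]
            rw [← Finset.mul_sum]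
  have hk := key h2 (⟨0, hr⟩ : Fin r) (fun i y k => ∑ j, c i j k * y j) R
    (fun i => x (finSumFinEquiv (Sum.inl i)))
    (fun α => x (finSumFinEquiv (Sum.inr α)))
    (fun a j => y (finProdFinEquiv (a, j)))
  rw [hk]
  exact Finset.sum_congr rfl fun a _ => Finset.sum_congr rfl fun k _ => by rw [zeq a k]
end

section
/- Let k be a field of characteristic not 2 and let r, s, n be positive integers. If the triple [r,s,n] is admissible over k, then the triple [r+8, 16s, 16n] is admissible over k. -/
/-! Auxiliary: evaluation of 8-vectors at literal indices -/

section Vec8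
variable {α : Type*}
@[simp] lemma vec8_val_five (x0 x1 x2 x3 x4 x5 x6 x7 : α) :
    (![x0, x1, x2, x3, x4, x5, x6, x7]) 5 = x5 := rfl
@[simp] lemma vec8_val_six (x0 x1 x2 x3 x4 x5 x6 x7 : α) :
    (![x0, x1, x2, x3, x4, x5, x6, x7]) 6 = x6 := rfl
@[simp] lemma vec8_val_seven (x0 x1 x2 x3 x4 x5 x6 x7 : α) :
    (![x0, x1, x2, x3, x4, x5, x6, x7]) 7 = x7 := rfl
end Vec8

/-! Octonion structure constants over an arbitrary field -/

def octC (K : Type*) [Field K] : Fin 8 → Fin 8 → Fin 8 → K :=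
  ![![![1, 0, 0, 0, 0, 0, 0, 0], ![0, 1, 0, 0, 0, 0, 0, 0], ![0, 0, 1, 0, 0, 0, 0, 0], ![0, 0, 0, 1, 0, 0, 0, 0], ![0, 0, 0, 0, 1, 0, 0, 0], ![0, 0, 0, 0, 0, 1, 0, 0], ![0, 0, 0, 0, 0, 0, 1, 0], ![0, 0, 0, 0, 0, 0, 0, 1]],
    ![![0, 1, 0, 0, 0, 0, 0, 0], ![-1, 0, 0, 0, 0, 0, 0, 0], ![0, 0, 0, 1, 0, 0, 0, 0], ![0, 0, -1, 0, 0, 0, 0, 0], ![0, 0, 0, 0, 0, 1, 0, 0], ![0, 0, 0, 0, -1, 0, 0, 0], ![0, 0, 0, 0, 0, 0, 0, -1], ![0, 0, 0, 0, 0, 0, 1, 0]],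
    ![![0, 0, 1, 0, 0, 0, 0, 0], ![0, 0, 0, -1, 0, 0, 0, 0], ![-1, 0, 0, 0, 0, 0, 0, 0], ![0, 1, 0, 0, 0, 0, 0, 0], ![0, 0, 0, 0, 0, 0, 1, 0], ![0, 0, 0, 0, 0, 0, 0, 1], ![0, 0, 0, 0, -1, 0, 0, 0], ![0, 0, 0, 0, 0, -1, 0, 0]],
    ![![0, 0, 0, 1, 0, 0, 0, 0], ![0, 0, 1, 0, 0, 0, 0, 0], ![0, -1, 0, 0, 0, 0, 0, 0], ![-1, 0, 0, 0, 0, 0, 0, 0], ![0, 0, 0, 0, 0, 0, 0, 1], ![0, 0, 0, 0, 0, 0, -1, 0], ![0, 0, 0, 0, 0, 1, 0, 0], ![0, 0, 0, 0, -1, 0, 0, 0]],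
    ![![0, 0, 0, 0, 1, 0, 0, 0], ![0, 0, 0, 0, 0, -1, 0, 0], ![0, 0, 0, 0, 0, 0, -1, 0], ![0, 0, 0, 0, 0, 0, 0, -1], ![-1, 0, 0, 0, 0, 0, 0, 0], ![0, 1, 0, 0, 0, 0, 0, 0], ![0, 0, 1, 0, 0, 0, 0, 0], ![0, 0, 0, 1, 0, 0, 0, 0]],
    ![![0, 0, 0, 0, 0, 1, 0, 0], ![0, 0, 0, 0, 1, 0, 0, 0], ![0, 0, 0, 0, 0, 0, 0, -1], ![0, 0, 0, 0, 0, 0, 1, 0], ![0, -1, 0, 0, 0, 0, 0, 0], ![-1, 0, 0, 0, 0, 0, 0, 0], ![0, 0, 0, -1, 0, 0, 0, 0], ![0, 0, 1, 0, 0, 0, 0, 0]],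
    ![![0, 0, 0, 0, 0, 0, 1, 0], ![0, 0, 0, 0, 0, 0, 0, 1], ![0, 0, 0, 0, 1, 0, 0, 0], ![0, 0, 0, 0, 0, -1, 0, 0], ![0, 0, -1, 0, 0, 0, 0, 0], ![0, 0, 0, 1, 0, 0, 0, 0], ![-1, 0, 0, 0, 0, 0, 0, 0], ![0, -1, 0, 0, 0, 0, 0, 0]],
    ![![0, 0, 0, 0, 0, 0, 0, 1], ![0, 0, 0, 0, 0, 0, -1, 0], ![0, 0, 0, 0, 0, 1, 0, 0], ![0, 0, 0, 0, 1, 0, 0, 0], ![0, 0, 0, -1, 0, 0, 0, 0], ![0, 0, -1, 0, 0, 0, 0, 0], ![0, 1, 0, 0, 0, 0, 0, 0], ![-1, 0, 0, 0, 0, 0, 0, 0]]]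

section Oct
variable {K : Type*} [Field K]

/-- Octonion conjugation on coordinates. -/
def oconj (a : Fin 8 → K) : Fin 8 → K :=
  ![a 0, -a 1, -a 2, -a 3, -a 4, -a 5, -a 6, -a 7]

/-- Multiplication of a vector of octonions (an element of `O ⊗ K^m`,
represented as `Fin 8 → Fin m → K`) on the left by an octonion `a`. -/
def ov {m : ℕ} (a : Fin 8 → K) (w : Fin 8 → Fin m → K) : Fin 8 → Fin m → K :=
  fun t j => ∑ q, (∑ p, octC K p q t * a p) * w q j

set_option maxHeartbeats 1000000 in
lemma O1s (a b : Fin 8 → K) :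
    ∑ t, (∑ q, (∑ p, octC K p q t * a p) * b q) ^ 2
      = (∑ p, a p ^ 2) * (∑ q, b q ^ 2) := by
  simp only [octC, Fin.sum_univ_eight, Matrix.cons_val_zero, Matrix.cons_val_one,
    Matrix.head_cons, Matrix.cons_val_two, Matrix.tail_cons, Matrix.cons_val_three,
    Matrix.cons_val_four, Matrix.cons_val_succ, vec8_val_five, vec8_val_six, vec8_val_seven,
    zero_mul, one_mul, neg_mul, mul_zero, add_zero, zero_add, neg_neg]
  ring

set_option maxHeartbeats 1000000 in
lemma O2s (a b d : Fin 8 → K) :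
    ∑ t, (∑ q, (∑ p, octC K p q t * a p) * b q) * d t
      = ∑ t, b t * (∑ q, (∑ p, octC K p q t * oconj a p) * d q) := by
  simp only [octC, oconj, Fin.sum_univ_eight, Matrix.cons_val_zero, Matrix.cons_val_one,
    Matrix.head_cons, Matrix.cons_val_two, Matrix.tail_cons, Matrix.cons_val_three,
    Matrix.cons_val_four, Matrix.cons_val_succ, vec8_val_five, vec8_val_six, vec8_val_seven,
    zero_mul, one_mul, neg_mul, mul_zero, add_zero, zero_add, neg_neg]
  ring

lemma oconj_norm (a : Fin 8 → K) : ∑ p, oconj a p ^ 2 = ∑ p, a p ^ 2 := by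
  simp only [oconj, Fin.sum_univ_eight, Matrix.cons_val_zero, Matrix.cons_val_one,
    Matrix.head_cons, Matrix.cons_val_two, Matrix.tail_cons, Matrix.cons_val_three,
    Matrix.cons_val_four, vec8_val_five, vec8_val_six, vec8_val_seven]
  ring

lemma oconj_add (a a' : Fin 8 → K) :
    oconj (fun p => a p + a' p) = fun p => oconj a p + oconj a' p := by
  funext p
  fin_cases p <;> simp [oconj] <;> ring

lemma oconj_smul (k : K) (a : Fin 8 → K) :
    oconj (fun p => k * a p) = fun p => k * oconj a p := by
  funext p
  fin_cases p <;> simp [oconj] <;> ring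

lemma ov_adda {m : ℕ} (a a' : Fin 8 → K) (w : Fin 8 → Fin m → K) :
    ov (fun p => a p + a' p) w = fun t j => ov a w t j + ov a' w t j := by
  funext t j
  simp only [ov, mul_add, add_mul, Finset.sum_add_distrib]

lemma ov_smula {m : ℕ} (k : K) (a : Fin 8 → K) (w : Fin 8 → Fin m → K) :
    ov (fun p => k * a p) w = fun t j => k * ov a w t j := by
  funext t j
  simp only [ov, Finset.mul_sum]
  refine Finset.sum_congr rfl fun q _ => ?_
  have h : (∑ p, octC K p q t * (k * a p)) = k * ∑ p, octC K p q t * a p := by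
    rw [Finset.mul_sum]
    exact Finset.sum_congr rfl fun p _ => by ring
  rw [h]
  ring

lemma ov_addw {m : ℕ} (a : Fin 8 → K) (w w' : Fin 8 → Fin m → K) :
    ov a (fun q j => w q j + w' q j) = fun t j => ov a w t j + ov a w' t j := by
  funext t j
  simp only [ov, mul_add, Finset.sum_add_distrib]

lemma ov_smulw {m : ℕ} (k : K) (a : Fin 8 → K) (w : Fin 8 → Fin m → K) :
    ov a (fun q j => k * w q j) = fun t j => k * ov a w t j := by
  funext t j
  simp only [ov, Finset.mul_sum]
  exact Finset.sum_congr rfl fun q _ => by ring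

/-- Norm multiplicativity for octonion-vector multiplication. -/
lemma ov_norm {m : ℕ} (a : Fin 8 → K) (w : Fin 8 → Fin m → K) :
    ∑ t, ∑ j, ov a w t j ^ 2 = (∑ p, a p ^ 2) * (∑ t, ∑ j, w t j ^ 2) := by
  rw [Finset.sum_comm]
  have : ∀ j : Fin m, ∑ t, ov a w t j ^ 2 = (∑ p, a p ^ 2) * (∑ q, w q j ^ 2) := by
    intro j
    simpa [ov] using O1s a (fun q => w q j)
  rw [Finset.sum_congr rfl fun j _ => this j, ← Finset.mul_sum, Finset.sum_comm]

/-- Adjointness of left multiplication and conjugation. -/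
lemma ov_adjoint {m : ℕ} (a : Fin 8 → K) (w w' : Fin 8 → Fin m → K) :
    ∑ t, ∑ j, ov a w t j * w' t j = ∑ t, ∑ j, w t j * ov (oconj a) w' t j := by
  rw [Finset.sum_comm, Finset.sum_comm (s := Finset.univ) (t := Finset.univ)
    (f := fun t j => w t j * ov (oconj a) w' t j)]
  refine Finset.sum_congr rfl fun j _ => ?_
  simpa [ov] using O2s a (fun q => w q j) (fun t => w' t j)

end Oct

/-! The bilinear composition map and its polarization identities -/

section FF
variable {K : Type*} [Field K] {r s n : ℕ}

/-- The bilinear map associated with a family of composition coefficients. -/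
def ff (c : Fin r → Fin s → Fin n → K) (x : Fin r → K) (y : Fin s → K) (k : Fin n) : K :=
  ∑ i, ∑ j, c i j k * x i * y j

variable (c : Fin r → Fin s → Fin n → K)

lemma ff_addl (x x' : Fin r → K) (y : Fin s → K) (k : Fin n) :
    ff c (fun i => x i + x' i) y k = ff c x y k + ff c x' y k := by
  simp only [ff, mul_add, add_mul, Finset.sum_add_distrib]

lemma ff_addr (x : Fin r → K) (y y' : Fin s → K) (k : Fin n) :
    ff c x (fun j => y j + y' j) k = ff c x y k + ff c x y' k := by
  simp only [ff, mul_add, Finset.sum_add_distrib]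

lemma ff_smull (t : K) (x : Fin r → K) (y : Fin s → K) (k : Fin n) :
    ff c (fun i => t * x i) y k = t * ff c x y k := by
  simp only [ff, Finset.mul_sum]
  refine Finset.sum_congr rfl fun i _ => Finset.sum_congr rfl fun j _ => by ring

lemma ff_smulr (t : K) (x : Fin r → K) (y : Fin s → K) (k : Fin n) :
    ff c x (fun j => t * y j) k = t * ff c x y k := by
  simp only [ff, Finset.mul_sum]
  refine Finset.sum_congr rfl fun i _ => Finset.sum_congr rfl fun j _ => by ring

/-- `ff` commutes with linear combinations in the second variable. -/
lemma ff_comb (x : Fin r → K) (g : Fin 8 → K) (w : Fin 8 → Fin s → K) (k : Fin n) :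
    ff c x (fun j => ∑ q, g q * w q j) k = ∑ q, g q * ff c x (w q) k := by
  simp only [ff, Finset.mul_sum]
  have swap1 : ∀ i : Fin r,
      (∑ j, ∑ q, c i j k * x i * (g q * w q j))
        = ∑ q, ∑ j, c i j k * x i * (g q * w q j) := fun i => Finset.sum_comm
  simp only [swap1]
  rw [Finset.sum_comm]
  exact Finset.sum_congr rfl fun q _ => Finset.sum_congr rfl fun i _ =>
    Finset.sum_congr rfl fun j _ => by ring

/-- `ff` applied to an octonion-vector product, expanded as a combination. -/
lemma ff_ov (x : Fin r → K) (a : Fin 8 → K) (w : Fin 8 → Fin s → K) (t : Fin 8) (k : Fin n) :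
    ff c x (ov a w t) k = ov a (fun q k' => ff c x (w q) k') t k := by
  have : ov a w t = fun j => ∑ q, (∑ p, octC K p q t * a p) * w q j := rfl
  rw [this, ff_comb]
  rfl

variable (hc : ∀ (x : Fin r → K) (y : Fin s → K),
    (∑ i, x i ^ 2) * (∑ j, y j ^ 2) = ∑ k, ff c x y k ^ 2)
variable (h2 : (2 : K) ≠ 0)

include hc h2 in
/-- First polarization: in the second variable. -/
lemma pol1 (x : Fin r → K) (y y' : Fin s → K) :
    (∑ i, x i ^ 2) * (∑ j, y j * y' j) = ∑ k, ff c x y k * ff c x y' k := by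
  have e1 := hc x (fun j => y j + y' j)
  simp only [ff_addr] at e1
  have hA : ∑ j, (y j + y' j) ^ 2
      = (∑ j, y j ^ 2) + 2 * (∑ j, y j * y' j) + ∑ j, y' j ^ 2 := by
    rw [Finset.mul_sum, ← Finset.sum_add_distrib, ← Finset.sum_add_distrib]
    exact Finset.sum_congr rfl fun j _ => by ring
  have hB : ∑ k, (ff c x y k + ff c x y' k) ^ 2
      = (∑ k, ff c x y k ^ 2) + 2 * (∑ k, ff c x y k * ff c x y' k)
        + ∑ k, ff c x y' k ^ 2 := by
    rw [Finset.mul_sum, ← Finset.sum_add_distrib, ← Finset.sum_add_distrib]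
    exact Finset.sum_congr rfl fun k _ => by ring
  rw [hA, hB] at e1
  refine mul_left_cancel₀ h2 ?_
  linear_combination e1 - hc x y - hc x y'

include hc h2 in
/-- Full polarization identity. -/
lemma pol2 (x x' : Fin r → K) (y y' : Fin s → K) :
    (∑ k, ff c x y k * ff c x' y' k) + (∑ k, ff c x y' k * ff c x' y k)
      = 2 * (∑ i, x i * x' i) * (∑ j, y j * y' j) := by
  have e1 := pol1 c hc h2 (fun i => x i + x' i) y y'
  simp only [ff_addl] at e1
  have hA : ∑ i, (x i + x' i) ^ 2
      = (∑ i, x i ^ 2) + 2 * (∑ i, x i * x' i) + ∑ i, x' i ^ 2 := by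
    rw [Finset.mul_sum, ← Finset.sum_add_distrib, ← Finset.sum_add_distrib]
    exact Finset.sum_congr rfl fun i _ => by ring
  have hB : ∑ k, (ff c x y k + ff c x' y k) * (ff c x y' k + ff c x' y' k)
      = (∑ k, ff c x y k * ff c x y' k) + ((∑ k, ff c x y k * ff c x' y' k)
        + (∑ k, ff c x y' k * ff c x' y k)) + ∑ k, ff c x' y k * ff c x' y' k := by
    rw [← Finset.sum_add_distrib, ← Finset.sum_add_distrib, ← Finset.sum_add_distrib]
    exact Finset.sum_congr rfl fun k _ => by ring
  rw [hB] at e1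
  linear_combination pol1 c hc h2 x y y' + pol1 c hc h2 x' y y' + (∑ j, y j * y' j) * hA - e1

end FF

/-! Index encodings and extraction of coefficients from a bilinear map -/

section Enc

/-- Identification of `(Fin 2 × Fin 8) × Fin m` with `Fin (16 * m)`. -/
def eqv16 (m : ℕ) : ((Fin 2 × Fin 8) × Fin m) ≃ Fin (16 * m) :=
  (finProdFinEquiv.prodCongr (Equiv.refl (Fin m))).trans finProdFinEquiv

def enc16 (m : ℕ) (d : Fin 2) (t : Fin 8) (j : Fin m) : Fin (16 * m) :=
  eqv16 m ((d, t), j)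

lemma sum_univ_16 {K : Type*} [AddCommMonoid K] {m : ℕ} (g : Fin (16 * m) → K) :
    ∑ J, g J = ∑ d : Fin 2, ∑ t : Fin 8, ∑ j : Fin m, g (enc16 m d t j) := by
  rw [← Equiv.sum_comp (eqv16 m) g]
  rw [Fintype.sum_prod_type, Fintype.sum_prod_type]
  rfl

variable {K : Type*} [Field K]

/-- If a bi-additive, bi-homogeneous map satisfies the norm identity,
the triple is admissible. -/
lemma adm_of_fun {R S N : ℕ} (Z : (Fin R → K) → (Fin S → K) → Fin N → K)
    (hadd1 : ∀ X X' Y, Z (X + X') Y = Z X Y + Z X' Y)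
    (hsmul1 : ∀ (t : K) X Y, Z (t • X) Y = t • Z X Y)
    (hadd2 : ∀ X Y Y', Z X (Y + Y') = Z X Y + Z X Y')
    (hsmul2 : ∀ (t : K) X Y, Z X (t • Y) = t • Z X Y)
    (hnorm : ∀ X Y, (∑ i, X i ^ 2) * (∑ j, Y j ^ 2) = ∑ k, Z X Y k ^ 2) :
    IsAdmissibleTriple K R S N := by
  classical
  have hz1 : ∀ Y, Z 0 Y = 0 := fun Y => by simpa using hsmul1 0 0 Y
  have hz2 : ∀ X, Z X 0 = 0 := fun X => by simpa using hsmul2 0 X 0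
  have hsum1 : ∀ (T : Finset (Fin R)) (G : Fin R → (Fin R → K)) (Y : Fin S → K),
      Z (∑ i ∈ T, G i) Y = ∑ i ∈ T, Z (G i) Y := by
    intro T G Y
    induction T using Finset.induction_on with
    | empty => simpa using hz1 Y
    | @insert a ss hni ih =>
        rw [Finset.sum_insert hni, Finset.sum_insert hni, hadd1, ih]
  have hsum2 : ∀ (X : Fin R → K) (T : Finset (Fin S)) (G : Fin S → (Fin S → K)),
      Z X (∑ j ∈ T, G j) = ∑ j ∈ T, Z X (G j) := by
    intro X T G
    induction T using Finset.induction_on with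
    | empty => simpa using hz2 X
    | @insert a ss hni ih =>
        rw [Finset.sum_insert hni, Finset.sum_insert hni, hadd2, ih]
  set δR : Fin R → (Fin R → K) := fun i => fun i' => if i = i' then 1 else 0 with hδR
  set δS : Fin S → (Fin S → K) := fun j => fun j' => if j = j' then 1 else 0 with hδS
  refine ⟨fun i j k => Z (δR i) (δS j) k, ?_⟩
  intro X Y
  rw [hnorm X Y]
  refine Finset.sum_congr rfl fun k _ => ?_
  have hX : X = ∑ i, X i • δR i := pi_eq_sum_univ X
  have hY : Y = ∑ j, Y j • δS j := pi_eq_sum_univ Y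
  have e1 : Z X Y = ∑ i, X i • Z (δR i) Y := by
    conv_lhs => rw [hX]
    rw [hsum1]
    exact Finset.sum_congr rfl fun i _ => hsmul1 (X i) (δR i) Y
  have e2 : ∀ i, Z (δR i) Y = ∑ j, Y j • Z (δR i) (δS j) := by
    intro i
    conv_lhs => rw [hY]
    rw [hsum2]
    exact Finset.sum_congr rfl fun j _ => hsmul2 (Y j) (δR i) (δS j)
  have key : ∑ i, ∑ j, Z (δR i) (δS j) k * X i * Y j = Z X Y k := by
    rw [e1, Finset.sum_apply]
    refine Finset.sum_congr rfl fun i _ => ?_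
    rw [Pi.smul_apply, smul_eq_mul, e2 i, Finset.sum_apply, Finset.mul_sum]
    refine Finset.sum_congr rfl fun j _ => ?_
    rw [Pi.smul_apply, smul_eq_mul]
    ring
  rw [key]

end Enc

/-! The doubling construction -/

section Main
variable {K : Type*} [Field K] {r s n : ℕ}

def zpart (c : Fin r → Fin s → Fin n → K) (e : Fin r → K) (i0 : Fin r)
    (X : Fin (r + 8) → K) (Y : Fin (16 * s) → K) (d : Fin 2) (t : Fin 8) (k : Fin n) : K :=
  if d = 0 then
    ff c (fun i => X (Fin.castAdd 8 i)) (fun j => Y (enc16 s 0 t j)) k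
      - ff c e (ov (oconj (fun p => X (Fin.natAdd r p))) (fun q j => Y (enc16 s 1 q j)) t) k
  else
    ff c e (ov (fun p => X (Fin.natAdd r p)) (fun q j => Y (enc16 s 0 q j)) t) k
      + 2 * X (Fin.castAdd 8 i0) * ff c e (fun j => Y (enc16 s 1 t j)) k
      - ff c (fun i => X (Fin.castAdd 8 i)) (fun j => Y (enc16 s 1 t j)) k

def Zc (c : Fin r → Fin s → Fin n → K) (e : Fin r → K) (i0 : Fin r)
    (X : Fin (r + 8) → K) (Y : Fin (16 * s) → K) (K0 : Fin (16 * n)) : K :=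
  zpart c e i0 X Y ((eqv16 n).symm K0).1.1 ((eqv16 n).symm K0).1.2 ((eqv16 n).symm K0).2

lemma Zc_enc (c : Fin r → Fin s → Fin n → K) (e : Fin r → K) (i0 : Fin r)
    (X : Fin (r + 8) → K) (Y : Fin (16 * s) → K) (d : Fin 2) (t : Fin 8) (k : Fin n) :
    Zc c e i0 X Y (enc16 n d t k) = zpart c e i0 X Y d t k := by
  unfold Zc enc16
  rw [Equiv.symm_apply_apply]

variable (c : Fin r → Fin s → Fin n → K) (e : Fin r → K) (i0 : Fin r)

lemma zpart_addX (X X' : Fin (r + 8) → K) (Y : Fin (16 * s) → K) (d : Fin 2) (t : Fin 8)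
    (k : Fin n) :
    zpart c e i0 (X + X') Y d t k = zpart c e i0 X Y d t k + zpart c e i0 X' Y d t k := by
  unfold zpart
  split_ifs with hd
  · simp only [Pi.add_apply, oconj_add, ov_adda, ff_addl, ff_addr]
    ring
  · simp only [Pi.add_apply, ov_adda, ff_addl, ff_addr]
    ring

lemma zpart_smulX (m : K) (X : Fin (r + 8) → K) (Y : Fin (16 * s) → K) (d : Fin 2) (t : Fin 8)
    (k : Fin n) :
    zpart c e i0 (m • X) Y d t k = m * zpart c e i0 X Y d t k := by
  unfold zpart
  split_ifs with hd
  · simp only [Pi.smul_apply, smul_eq_mul, oconj_smul, ov_smula, ff_smull, ff_smulr]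
    ring
  · simp only [Pi.smul_apply, smul_eq_mul, ov_smula, ff_smull, ff_smulr]
    ring

lemma zpart_addY (X : Fin (r + 8) → K) (Y Y' : Fin (16 * s) → K) (d : Fin 2) (t : Fin 8)
    (k : Fin n) :
    zpart c e i0 X (Y + Y') d t k = zpart c e i0 X Y d t k + zpart c e i0 X Y' d t k := by
  unfold zpart
  split_ifs with hd
  · simp only [Pi.add_apply, ov_addw, ff_addr]
    ring
  · simp only [Pi.add_apply, ov_addw, ff_addr]
    ring

lemma zpart_smulY (m : K) (X : Fin (r + 8) → K) (Y : Fin (16 * s) → K) (d : Fin 2) (t : Fin 8)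
    (k : Fin n) :
    zpart c e i0 X (m • Y) d t k = m * zpart c e i0 X Y d t k := by
  unfold zpart
  split_ifs with hd
  · simp only [Pi.smul_apply, smul_eq_mul, ov_smulw, ff_smulr]
    ring
  · simp only [Pi.smul_apply, smul_eq_mul, ov_smulw, ff_smulr]
    ring

end Main

section MainId
variable {K : Type*} [Field K] {r s n : ℕ}
variable (c : Fin r → Fin s → Fin n → K) (e : Fin r → K) (i0 : Fin r)

set_option maxHeartbeats 1000000 in
lemma main_identity
    (hc : ∀ (x : Fin r → K) (y : Fin s → K),
      (∑ i, x i ^ 2) * (∑ j, y j ^ 2) = ∑ k, ff c x y k ^ 2)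
    (h2 : (2 : K) ≠ 0)
    (he1 : ∑ i, e i ^ 2 = 1)
    (hee : ∑ i, e i * e i = 1)
    (hex : ∀ x : Fin r → K, ∑ i, e i * x i = x i0)
    (x : Fin r → K) (a : Fin 8 → K) (u0 u1 : Fin 8 → Fin s → K) :
    ((∑ i, x i ^ 2) + ∑ p, a p ^ 2)
        * ((∑ t, ∑ j, u0 t j ^ 2) + ∑ t, ∑ j, u1 t j ^ 2)
      = (∑ t, ∑ k, (ff c x (u0 t) k - ff c e (ov (oconj a) u1 t) k) ^ 2)
        + ∑ t, ∑ k, (ff c e (ov a u0 t) k + 2 * x i0 * ff c e (u1 t) k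
            - ff c x (u1 t) k) ^ 2 := by
  -- lift of the composition identity to octonion vectors
  have V1 : ∀ (x' : Fin r → K) (w : Fin 8 → Fin s → K),
      ∑ t, ∑ k, ff c x' (w t) k ^ 2 = (∑ i, x' i ^ 2) * (∑ t, ∑ j, w t j ^ 2) := by
    intro x' w
    rw [Finset.mul_sum]
    exact Finset.sum_congr rfl fun t _ => (hc x' (w t)).symm
  -- lift of the polarization identity
  have V2 : ∀ (x1 x2 : Fin r → K) (w w' : Fin 8 → Fin s → K),
      (∑ t, ∑ k, ff c x1 (w t) k * ff c x2 (w' t) k)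
        + (∑ t, ∑ k, ff c x1 (w' t) k * ff c x2 (w t) k)
        = 2 * (∑ i, x1 i * x2 i) * (∑ t, ∑ j, w t j * w' t j) := by
    intro x1 x2 w w'
    rw [← Finset.sum_add_distrib, Finset.mul_sum]
    exact Finset.sum_congr rfl fun t _ => by
      rw [← Finset.sum_add_distrib] at *
      have := pol2 c hc h2 x1 x2 (w t) (w' t)
      rw [← Finset.sum_add_distrib] at this
      exact this
  have V3 : ∀ (w w' : Fin 8 → Fin s → K),
      ∑ t, ∑ k, ff c e (w t) k * ff c e (w' t) k = ∑ t, ∑ j, w t j * w' t j := by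
    intro w w'
    have h := V2 e e w w'
    rw [hee] at h
    have hswap : (∑ t, ∑ k, ff c e (w' t) k * ff c e (w t) k)
        = ∑ t, ∑ k, ff c e (w t) k * ff c e (w' t) k :=
      Finset.sum_congr rfl fun t _ => Finset.sum_congr rfl fun k _ => mul_comm _ _
    rw [hswap] at h
    refine mul_left_cancel₀ h2 ?_
    linear_combination h
  have sqm : ∀ (w : Fin 8 → Fin s → K),
      ∑ t, ∑ j, w t j * w t j = ∑ t, ∑ j, w t j ^ 2 :=
    fun w => Finset.sum_congr rfl fun t _ => Finset.sum_congr rfl fun j _ => (sq _).symm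
  -- the instances
  have A0 := V1 x u0
  have A1 : ∑ t, ∑ k, ff c e (ov (oconj a) u1 t) k ^ 2
      = (∑ p, a p ^ 2) * ∑ t, ∑ j, u1 t j ^ 2 := by
    rw [V1 e (ov (oconj a) u1), he1, one_mul, ov_norm, oconj_norm]
  have A2 : ∑ t, ∑ k, ff c e (ov a u0 t) k ^ 2
      = (∑ p, a p ^ 2) * ∑ t, ∑ j, u0 t j ^ 2 := by
    rw [V1 e (ov a u0), he1, one_mul, ov_norm]
  have A3 : ∑ t, ∑ k, ff c e (u1 t) k ^ 2 = ∑ t, ∑ j, u1 t j ^ 2 := by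
    rw [V1 e u1, he1, one_mul]
  have A4 := V1 x u1
  have A5 : ∑ t, ∑ k, ff c e (ov a u0 t) k * ff c e (u1 t) k
      = ∑ t, ∑ j, ov a u0 t j * u1 t j := V3 (ov a u0) u1
  have A6 : ∑ t, ∑ k, ff c e (u1 t) k * ff c x (u1 t) k
      = x i0 * ∑ t, ∑ j, u1 t j ^ 2 := by
    have h := V2 e x u1 u1
    rw [hex x, sqm u1] at h
    refine mul_left_cancel₀ h2 ?_
    linear_combination h
  have A7 : (∑ t, ∑ k, ff c e (ov a u0 t) k * ff c x (u1 t) k)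
      + (∑ t, ∑ k, ff c e (u1 t) k * ff c x (ov a u0 t) k)
      = 2 * x i0 * ∑ t, ∑ j, ov a u0 t j * u1 t j := by
    have h := V2 e x (ov a u0) u1
    rwa [hex x] at h
  have A8 : ∑ t, ∑ k, ff c e (u1 t) k * ff c x (ov a u0 t) k
      = ∑ t, ∑ k, ff c x (u0 t) k * ff c e (ov (oconj a) u1 t) k := by
    calc ∑ t, ∑ k, ff c e (u1 t) k * ff c x (ov a u0 t) k
        = ∑ t, ∑ k, ov a (fun q k' => ff c x (u0 q) k') t k * ff c e (u1 t) k := by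
          refine Finset.sum_congr rfl fun t _ => Finset.sum_congr rfl fun k _ => ?_
          rw [ff_ov]
          ring
      _ = ∑ t, ∑ k, ff c x (u0 t) k
            * ov (oconj a) (fun q k' => ff c e (u1 q) k') t k := by
          exact ov_adjoint a _ _
      _ = ∑ t, ∑ k, ff c x (u0 t) k * ff c e (ov (oconj a) u1 t) k := by
          refine Finset.sum_congr rfl fun t _ => Finset.sum_congr rfl fun k _ => ?_
          rw [← ff_ov]
  -- expansions of the squared differences
  have X1 : ∑ t, ∑ k, (ff c x (u0 t) k - ff c e (ov (oconj a) u1 t) k) ^ 2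
      = (∑ t, ∑ k, ff c x (u0 t) k ^ 2)
        + (∑ t, ∑ k, ff c e (ov (oconj a) u1 t) k ^ 2)
        - 2 * ∑ t, ∑ k, ff c x (u0 t) k * ff c e (ov (oconj a) u1 t) k := by
    have inner : ∀ t : Fin 8, ∑ k, (ff c x (u0 t) k - ff c e (ov (oconj a) u1 t) k) ^ 2
        = (∑ k, ff c x (u0 t) k ^ 2) + (∑ k, ff c e (ov (oconj a) u1 t) k ^ 2)
          - 2 * ∑ k, ff c x (u0 t) k * ff c e (ov (oconj a) u1 t) k := by
      intro t
      rw [Finset.mul_sum, ← Finset.sum_add_distrib, ← Finset.sum_sub_distrib]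
      exact Finset.sum_congr rfl fun k _ => by ring
    simp only [inner]
    conv_rhs => rw [Finset.mul_sum, ← Finset.sum_add_distrib, ← Finset.sum_sub_distrib]
  have X2 : ∑ t, ∑ k, (ff c e (ov a u0 t) k + 2 * x i0 * ff c e (u1 t) k
        - ff c x (u1 t) k) ^ 2
      = (∑ t, ∑ k, ff c e (ov a u0 t) k ^ 2)
        + (2 * x i0) ^ 2 * (∑ t, ∑ k, ff c e (u1 t) k ^ 2)
        + (∑ t, ∑ k, ff c x (u1 t) k ^ 2)
        + 2 * (2 * x i0) * (∑ t, ∑ k, ff c e (ov a u0 t) k * ff c e (u1 t) k)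
        - 2 * (∑ t, ∑ k, ff c e (ov a u0 t) k * ff c x (u1 t) k)
        - 2 * (2 * x i0) * ∑ t, ∑ k, ff c e (u1 t) k * ff c x (u1 t) k := by
    have inner : ∀ t : Fin 8, ∑ k, (ff c e (ov a u0 t) k + 2 * x i0 * ff c e (u1 t) k
          - ff c x (u1 t) k) ^ 2
        = (∑ k, ff c e (ov a u0 t) k ^ 2)
          + (2 * x i0) ^ 2 * (∑ k, ff c e (u1 t) k ^ 2)
          + (∑ k, ff c x (u1 t) k ^ 2)
          + 2 * (2 * x i0) * (∑ k, ff c e (ov a u0 t) k * ff c e (u1 t) k)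
          - 2 * (∑ k, ff c e (ov a u0 t) k * ff c x (u1 t) k)
          - 2 * (2 * x i0) * ∑ k, ff c e (u1 t) k * ff c x (u1 t) k := by
      intro t
      rw [Finset.mul_sum, Finset.mul_sum, Finset.mul_sum, Finset.mul_sum,
        ← Finset.sum_add_distrib, ← Finset.sum_add_distrib, ← Finset.sum_add_distrib,
        ← Finset.sum_sub_distrib, ← Finset.sum_sub_distrib]
      exact Finset.sum_congr rfl fun k _ => by ring
    simp only [inner]
    conv_rhs => rw [Finset.mul_sum, Finset.mul_sum, Finset.mul_sum, Finset.mul_sum,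
      ← Finset.sum_add_distrib, ← Finset.sum_add_distrib, ← Finset.sum_add_distrib,
      ← Finset.sum_sub_distrib, ← Finset.sum_sub_distrib]
  rw [X1, X2]
  linear_combination (-1 : K) * A0 - A1 - A2 - (2 * x i0) ^ 2 * A3 - A4
    - 2 * (2 * x i0) * A5 + 2 * (2 * x i0) * A6 + 2 * A7 - 2 * A8

end MainId

theorem doubling_construction_eight (K : Type*) [Field K] (hchar : ringChar K ≠ 2)
    (r s n : ℕ) (hr : 0 < r) (hs : 0 < s) (hn : 0 < n)
    (h : IsAdmissibleTriple K r s n) :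
    IsAdmissibleTriple K (r + 8) (16 * s) (16 * n) := by
  classical
  obtain ⟨c, hc'⟩ := h
  have hc : ∀ (x : Fin r → K) (y : Fin s → K),
      (∑ i, x i ^ 2) * (∑ j, y j ^ 2) = ∑ k, ff c x y k ^ 2 := hc'
  have h2 : (2 : K) ≠ 0 := Ring.two_ne_zero hchar
  set i0 : Fin r := ⟨0, hr⟩ with hi0
  set e : Fin r → K := fun i => if i = i0 then 1 else 0 with he
  have he1 : ∑ i, e i ^ 2 = 1 := by
    have : ∀ i, e i ^ 2 = if i = i0 then (1 : K) else 0 := by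
      intro i
      by_cases hh : i = i0 <;> simp [he, hh]
    simp only [this]
    rw [Finset.sum_ite_eq' Finset.univ i0 fun _ => (1 : K)]
    simp
  have hee : ∑ i, e i * e i = 1 := by
    have : ∀ i, e i * e i = if i = i0 then (1 : K) else 0 := by
      intro i
      by_cases hh : i = i0 <;> simp [he, hh]
    simp only [this]
    rw [Finset.sum_ite_eq' Finset.univ i0 fun _ => (1 : K)]
    simp
  have hex : ∀ x : Fin r → K, ∑ i, e i * x i = x i0 := by
    intro x
    have : ∀ i, e i * x i = if i = i0 then x i else 0 := by
      intro i
      by_cases hh : i = i0 <;> simp [he, hh]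
    simp only [this]
    rw [Finset.sum_ite_eq' Finset.univ i0 fun i => x i]
    simp
  refine adm_of_fun (Zc c e i0) ?_ ?_ ?_ ?_ ?_
  · intro X X' Y
    funext K0
    exact zpart_addX c e i0 X X' Y _ _ _
  · intro m X Y
    funext K0
    exact zpart_smulX c e i0 m X Y _ _ _
  · intro X Y Y'
    funext K0
    exact zpart_addY c e i0 X Y Y' _ _ _
  · intro m X Y
    funext K0
    exact zpart_smulY c e i0 m X Y _ _ _
  · intro X Y
    have hL : ∑ I, X I ^ 2
        = (∑ i : Fin r, X (Fin.castAdd 8 i) ^ 2) + ∑ p : Fin 8, X (Fin.natAdd r p) ^ 2 :=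
      Fin.sum_univ_add _
    have hRY : ∑ J, Y J ^ 2
        = (∑ t : Fin 8, ∑ j : Fin s, Y (enc16 s 0 t j) ^ 2)
          + ∑ t : Fin 8, ∑ j : Fin s, Y (enc16 s 1 t j) ^ 2 := by
      rw [sum_univ_16 (fun J => Y J ^ 2), Fin.sum_univ_two]
    have hRZ : ∑ K0, Zc c e i0 X Y K0 ^ 2
        = (∑ t : Fin 8, ∑ k : Fin n, zpart c e i0 X Y 0 t k ^ 2)
          + ∑ t : Fin 8, ∑ k : Fin n, zpart c e i0 X Y 1 t k ^ 2 := by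
      rw [sum_univ_16 (fun K0 => Zc c e i0 X Y K0 ^ 2)]
      simp only [Zc_enc]
      rw [Fin.sum_univ_two]
    rw [hL, hRY, hRZ]
    have hz0 : ∀ (t : Fin 8) (k : Fin n), zpart c e i0 X Y 0 t k
        = ff c (fun i => X (Fin.castAdd 8 i)) (fun j => Y (enc16 s 0 t j)) k
          - ff c e (ov (oconj (fun p => X (Fin.natAdd r p)))
              (fun q j => Y (enc16 s 1 q j)) t) k := by
      intro t k
      simp [zpart]
    have hz1 : ∀ (t : Fin 8) (k : Fin n), zpart c e i0 X Y 1 t k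
        = ff c e (ov (fun p => X (Fin.natAdd r p)) (fun q j => Y (enc16 s 0 q j)) t) k
          + 2 * X (Fin.castAdd 8 i0) * ff c e (fun j => Y (enc16 s 1 t j)) k
          - ff c (fun i => X (Fin.castAdd 8 i)) (fun j => Y (enc16 s 1 t j)) k := by
      intro t k
      simp [zpart]
    simp only [hz0, hz1]
    exact main_identity c e i0 hc h2 he1 hee hex
      (fun i => X (Fin.castAdd 8 i)) (fun p => X (Fin.natAdd r p))
      (fun t j => Y (enc16 s 0 t j)) (fun t j => Y (enc16 s 1 t j))
end
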